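/- arXiv:1909.11466 — 3 statements merged into one kernel-verified Lean document; each statement's English description precedes it below -/
import Mathlib

section
/- Let f : D₃ → ℝ^d be Lipschitz, g : D₃ → ℝ^d be α-Hölder with α ∈ (2s,1] and s ∈ (0,1/2), and ζ : D₁ → [0,1] measurable. Then the function G(x) := ∫_{D₁} (f(x+y)-f(x))·(g(x+y)-g(x)) ζ(y) / |y|^{n+2s} dy is well-defined and α-Hölder continuous on D₁, with [G]_{C^{0,α}(D₁)} ≤ C(n,s,α) · Lip(f) · [g]_{C^{0,α}(D₃)}. -/
set_option maxHeartbeats 2000000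

open MeasureTheory Real
open scoped RealInnerProductSpace ENNReal NNReal

section StmtAux
open Set

lemma stmt4_aux_int {n : ℕ} {q : ℝ} (hq : -(n:ℝ) < q) :
    IntegrableOn (fun y : EuclideanSpace ℝ (Fin n) => ‖y‖ ^ q)
      (Metric.ball 0 1) := by
  have hmeas : Measurable fun y : EuclideanSpace ℝ (Fin n) => ‖y‖ ^ q := by fun_prop
  rcases le_or_gt 0 q with hq0 | hq0
  · refine Measure.integrableOn_of_bounded (M := 1) measure_ball_lt_top.ne
      hmeas.aestronglyMeasurable ?_
    filter_upwards [ae_restrict_mem measurableSet_ball] with y hy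
    rw [Real.norm_eq_abs, abs_of_nonneg (rpow_nonneg (norm_nonneg _) _)]
    calc ‖y‖ ^ q ≤ (1:ℝ) ^ q :=
          rpow_le_rpow (norm_nonneg _) (le_of_lt (mem_ball_zero_iff.mp hy)) hq0
      _ = 1 := one_rpow q
  · constructor
    · exact hmeas.aestronglyMeasurable.restrict
    · rw [hasFiniteIntegral_iff_ofReal (Filter.Eventually.of_forall fun y =>
        rpow_nonneg (norm_nonneg _) _)]
      rw [lintegral_eq_lintegral_meas_le _ (Filter.Eventually.of_forall fun y =>
        rpow_nonneg (norm_nonneg _) _) (hmeas.aemeasurable)]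
      set μ := (volume : Measure (EuclideanSpace ℝ (Fin n)))
      set mB := μ (Metric.ball 0 1) with hmB
      have hmBfin : mB < ⊤ := measure_ball_lt_top
      have hkey : ∀ t : ℝ, t ∈ Ioi (0:ℝ) →
          (μ.restrict (Metric.ball 0 1)) {a | t ≤ ‖a‖ ^ q}
            ≤ min mB (ENNReal.ofReal (t ^ (q⁻¹ * n)) * mB) := by
        intro t ht
        rw [Measure.restrict_apply₀' measurableSet_ball.nullMeasurableSet]
        refine le_min (measure_mono inter_subset_right) ?_
        have h1 : {a : EuclideanSpace ℝ (Fin n) | t ≤ ‖a‖ ^ q} ∩ Metric.ball 0 1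
            ⊆ Metric.closedBall 0 (t ^ q⁻¹) := by
          rintro a ⟨ha, -⟩
          simp only [mem_setOf_eq] at ha
          have hane : (0:ℝ) < ‖a‖ := by
            rcases eq_or_lt_of_le (norm_nonneg a) with h | h
            · exfalso
              rw [← h] at ha
              rw [Real.zero_rpow (ne_of_lt hq0)] at ha
              exact absurd (lt_of_lt_of_le ht ha) (lt_irrefl 0)
            · exact h
          rw [Metric.mem_closedBall, dist_zero_right]
          exact (Real.le_rpow_inv_iff_of_neg hane ht hq0).mpr ha
        calc μ ({a : EuclideanSpace ℝ (Fin n) | t ≤ ‖a‖ ^ q} ∩ Metric.ball 0 1)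
            ≤ μ (Metric.closedBall 0 (t ^ q⁻¹)) := measure_mono h1
          _ = ENNReal.ofReal ((t ^ q⁻¹) ^ (Module.finrank ℝ (EuclideanSpace ℝ (Fin n)))) * mB :=
              Measure.addHaar_closedBall μ 0 (rpow_nonneg ht.le _)
          _ = ENNReal.ofReal (t ^ (q⁻¹ * n)) * mB := by
              rw [finrank_euclideanSpace, Fintype.card_fin, ← Real.rpow_natCast (t ^ q⁻¹) n,
                ← Real.rpow_mul ht.le]
      calc (∫⁻ t in Ioi (0:ℝ), (μ.restrict (Metric.ball 0 1)) {a | t ≤ ‖a‖ ^ q})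
          ≤ ∫⁻ t in Ioi (0:ℝ), min mB (ENNReal.ofReal (t ^ (q⁻¹ * n)) * mB) :=
            setLIntegral_mono' measurableSet_Ioi hkey
        _ ≤ (∫⁻ t in Ioc (0:ℝ) 1, min mB (ENNReal.ofReal (t ^ (q⁻¹ * n)) * mB))
            + ∫⁻ t in Ioi (1:ℝ), min mB (ENNReal.ofReal (t ^ (q⁻¹ * n)) * mB) := by
            rw [← lintegral_union measurableSet_Ioi]
            · exact lintegral_mono_set Ioi_subset_Ioc_union_Ioi
            · exact Ioc_disjoint_Ioi le_rfl
        _ < ⊤ := by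
            rw [ENNReal.add_lt_top]
            constructor
            · calc (∫⁻ t in Ioc (0:ℝ) 1, min mB (ENNReal.ofReal (t ^ (q⁻¹ * n)) * mB))
                  ≤ ∫⁻ _ in Ioc (0:ℝ) 1, mB := lintegral_mono fun t => min_le_left _ _
                _ = mB * volume (Ioc (0:ℝ) 1) := by rw [setLIntegral_const]
                _ < ⊤ := ENNReal.mul_lt_top hmBfin (by simp)
            · calc (∫⁻ t in Ioi (1:ℝ), min mB (ENNReal.ofReal (t ^ (q⁻¹ * n)) * mB))
                  ≤ ∫⁻ t in Ioi (1:ℝ), ENNReal.ofReal (t ^ (q⁻¹ * n)) * mB :=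
                    lintegral_mono fun t => min_le_right _ _
                _ = (∫⁻ t in Ioi (1:ℝ), ENNReal.ofReal (t ^ (q⁻¹ * n))) * mB :=
                    lintegral_mul_const' _ _ hmBfin.ne
                _ < ⊤ := by
                    refine ENNReal.mul_lt_top ?_ hmBfin
                    refine IntegrableOn.setLIntegral_lt_top ?_
                    refine integrableOn_Ioi_rpow_of_lt ?_ one_pos
                    rw [mul_comm, ← div_eq_mul_inv, div_lt_iff_of_neg hq0]
                    linarith

lemma stmt4_aux_min_rpow {a b β : ℝ} (ha : 0 ≤ a) (hb : 0 ≤ b) (h0 : 0 ≤ β) (h1 : β ≤ 1) :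
    min a b ≤ a ^ β * b ^ (1 - β) := by
  have hm : 0 ≤ min a b := le_min ha hb
  calc min a b = min a b ^ (β + (1 - β)) := by norm_num
    _ = min a b ^ β * min a b ^ (1 - β) := by
        rw [rpow_add' hm (by norm_num)]
    _ ≤ a ^ β * b ^ (1 - β) :=
        mul_le_mul (rpow_le_rpow hm (min_le_left _ _) h0)
          (rpow_le_rpow hm (min_le_right _ _) (by linarith)) (rpow_nonneg hm _)
          (rpow_nonneg ha _)

lemma stmt4_aux_holder_cont {n d : ℕ} {α : ℝ} (hα0 : 0 < α)
    {g : EuclideanSpace ℝ (Fin n) → EuclideanSpace ℝ (Fin d)} {H : ℝ} (hH0 : 0 ≤ H)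
    (hg : ∀ x ∈ Metric.ball (0 : EuclideanSpace ℝ (Fin n)) 3,
          ∀ y ∈ Metric.ball (0 : EuclideanSpace ℝ (Fin n)) 3,
            ‖g x - g y‖ ≤ H * ‖x - y‖ ^ α) :
    ContinuousOn g (Metric.ball 0 3) := by
  have hol : HolderOnWith H.toNNReal α.toNNReal g (Metric.ball 0 3) := by
    intro a ha b hb
    rw [edist_dist, edist_dist]
    calc (ENNReal.ofReal (dist (g a) (g b)))
        ≤ ENNReal.ofReal (H * dist a b ^ α) := by
          apply ENNReal.ofReal_le_ofReal
          simpa [dist_eq_norm] using hg a ha b hb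
      _ = (H.toNNReal : ℝ≥0∞) * ENNReal.ofReal (dist a b) ^ (α.toNNReal : ℝ) := by
          rw [ENNReal.ofReal_mul hH0,
            ← ENNReal.ofReal_rpow_of_nonneg dist_nonneg hα0.le,
            Real.coe_toNNReal _ hα0.le, ENNReal.ofReal_eq_coe_nnreal hH0]
          have hHn : H.toNNReal = (⟨H, hH0⟩ : ℝ≥0) := Subtype.ext (max_eq_left hH0)
          rw [hHn, mul_comm]
          exact mul_comm _ _
  exact hol.continuousOn (Real.toNNReal_pos.mpr hα0)

end StmtAux

theorem stmt_4 (n d : ℕ) (s α : ℝ)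
    (hs : s ∈ Set.Ioo (0:ℝ) (1/2)) (hα : α ∈ Set.Ioc (2*s) 1) :
    ∃ C : ℝ, 0 < C ∧
      ∀ (f g : EuclideanSpace ℝ (Fin n) → EuclideanSpace ℝ (Fin d))
        (ζ : EuclideanSpace ℝ (Fin n) → ℝ) (L H : ℝ),
        0 ≤ L → 0 ≤ H →
        (∀ x ∈ Metric.ball (0 : EuclideanSpace ℝ (Fin n)) 3,
          ∀ y ∈ Metric.ball (0 : EuclideanSpace ℝ (Fin n)) 3,
            ‖f x - f y‖ ≤ L * ‖x - y‖) →
        (∀ x ∈ Metric.ball (0 : EuclideanSpace ℝ (Fin n)) 3,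
          ∀ y ∈ Metric.ball (0 : EuclideanSpace ℝ (Fin n)) 3,
            ‖g x - g y‖ ≤ H * ‖x - y‖ ^ α) →
        Measurable ζ → (∀ y, ζ y ∈ Set.Icc (0:ℝ) 1) →
        (∀ x ∈ Metric.ball (0 : EuclideanSpace ℝ (Fin n)) 1,
          IntegrableOn
            (fun y => ⟪f (x + y) - f x, g (x + y) - g x⟫ * ζ y / ‖y‖ ^ ((n:ℝ) + 2*s))
            (Metric.ball (0 : EuclideanSpace ℝ (Fin n)) 1)) ∧
        ∀ x ∈ Metric.ball (0 : EuclideanSpace ℝ (Fin n)) 1,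
          ∀ x' ∈ Metric.ball (0 : EuclideanSpace ℝ (Fin n)) 1,
            |(∫ y in Metric.ball (0 : EuclideanSpace ℝ (Fin n)) 1,
                ⟪f (x + y) - f x, g (x + y) - g x⟫ * ζ y / ‖y‖ ^ ((n:ℝ) + 2*s)) -
              (∫ y in Metric.ball (0 : EuclideanSpace ℝ (Fin n)) 1,
                ⟪f (x' + y) - f x', g (x' + y) - g x'⟫ * ζ y / ‖y‖ ^ ((n:ℝ) + 2*s))| ≤
              C * L * H * ‖x - x'‖ ^ α := by
  obtain ⟨hs0, hs2⟩ := hs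
  obtain ⟨hα1, hα2⟩ := hα
  have hα0 : 0 < α := lt_of_le_of_lt (by linarith) hα1
  set p : ℝ := (n:ℝ) + 2*s with hp
  have hq1 : -(n:ℝ) < 1 + α - p := by simp only [hp]; linarith
  have hq2 : -(n:ℝ) < 1 - p := by simp only [hp]; linarith
  have I1 := stmt4_aux_int hq1
  have I2 := stmt4_aux_int hq2
  set K : ℝ := ∫ y in Metric.ball (0 : EuclideanSpace ℝ (Fin n)) 1, ‖y‖ ^ (1 - p) with hK
  have hK0 : 0 ≤ K := integral_nonneg fun y => rpow_nonneg (norm_nonneg _) _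
  refine ⟨4*K + 1, by positivity, ?_⟩
  intro f g ζ L H hL0 hH0 hf hg hζm hζ01
  -- continuity of f and g on the big ball
  have hfc : ContinuousOn f (Metric.ball 0 3) := by
    have : LipschitzOnWith L.toNNReal f (Metric.ball 0 3) := by
      rw [lipschitzOnWith_iff_dist_le_mul]
      intro a ha b hb
      rw [dist_eq_norm, dist_eq_norm, Real.coe_toNNReal _ hL0]
      exact hf a ha b hb
    exact this.continuousOn
  have hgc : ContinuousOn g (Metric.ball 0 3) := stmt4_aux_holder_cont hα0 hH0 hg
  -- membership facts
  have hmem : ∀ x y : EuclideanSpace ℝ (Fin n), x ∈ Metric.ball (0:EuclideanSpace ℝ (Fin n)) 1 →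
      y ∈ Metric.ball (0:EuclideanSpace ℝ (Fin n)) 1 →
      x + y ∈ Metric.ball (0:EuclideanSpace ℝ (Fin n)) 3 := by
    intro x y hx hy
    rw [mem_ball_zero_iff] at hx hy ⊢
    calc ‖x + y‖ ≤ ‖x‖ + ‖y‖ := norm_add_le x y
      _ < 3 := by linarith
  have hmem1 : ∀ x : EuclideanSpace ℝ (Fin n), x ∈ Metric.ball (0:EuclideanSpace ℝ (Fin n)) 1 →
      x ∈ Metric.ball (0:EuclideanSpace ℝ (Fin n)) 3 := fun x hx =>
    Metric.ball_subset_ball (by norm_num) hx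
  -- key integrability
  have key : ∀ x ∈ Metric.ball (0 : EuclideanSpace ℝ (Fin n)) 1,
      IntegrableOn
        (fun y => ⟪f (x + y) - f x, g (x + y) - g x⟫ * ζ y / ‖y‖ ^ ((n:ℝ) + 2*s))
        (Metric.ball (0 : EuclideanSpace ℝ (Fin n)) 1) := by
    intro x hx
    have hFc : ContinuousOn
        (fun y : EuclideanSpace ℝ (Fin n) => ⟪f (x + y) - f x, g (x + y) - g x⟫)
        (Metric.ball 0 1) := by
      have hadd : ContinuousOn (fun y : EuclideanSpace ℝ (Fin n) => x + y) (Metric.ball 0 1) :=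
        by fun_prop
      have hmap : Set.MapsTo (fun y : EuclideanSpace ℝ (Fin n) => x + y)
          (Metric.ball 0 1) (Metric.ball 0 3) := fun y hy => hmem x y hx hy
      exact ContinuousOn.inner ((hfc.comp hadd hmap).sub continuousOn_const)
        ((hgc.comp hadd hmap).sub continuousOn_const)
    have hmint : AEStronglyMeasurable
        (fun y => ⟪f (x + y) - f x, g (x + y) - g x⟫ * ζ y / ‖y‖ ^ ((n:ℝ) + 2*s))
        (volume.restrict (Metric.ball (0:EuclideanSpace ℝ (Fin n)) 1)) := by
      have h1 : AEMeasurable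
          (fun y => ⟪f (x + y) - f x, g (x + y) - g x⟫ * ζ y)
          (volume.restrict (Metric.ball (0:EuclideanSpace ℝ (Fin n)) 1)) :=
        ((hFc.aestronglyMeasurable measurableSet_ball).aemeasurable).mul
          (hζm.aemeasurable.restrict)
      have h2 : AEMeasurable
          (fun y : EuclideanSpace ℝ (Fin n) => ‖y‖ ^ ((n:ℝ) + 2*s))
          (volume.restrict (Metric.ball (0:EuclideanSpace ℝ (Fin n)) 1)) :=
        (Measurable.aemeasurable (by fun_prop))
      exact (h1.div h2).aestronglyMeasurable
    refine Integrable.mono' (I1.const_mul (L*H)) hmint ?_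
    filter_upwards [ae_restrict_mem measurableSet_ball] with y hy
    rw [Real.norm_eq_abs]
    by_cases hy0 : y = 0
    · simp only [hy0, add_zero, sub_self, inner_zero_left, zero_mul, zero_div, abs_zero]
      positivity
    · have hyp : (0:ℝ) < ‖y‖ := norm_pos_iff.mpr hy0
      have hfb : ‖f (x + y) - f x‖ ≤ L * ‖y‖ := by
        have := hf (x+y) (hmem x y hx hy) x (hmem1 x hx)
        rwa [add_sub_cancel_left] at this
      have hgb : ‖g (x + y) - g x‖ ≤ H * ‖y‖ ^ α := by
        have := hg (x+y) (hmem x y hx hy) x (hmem1 x hx)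
        rwa [add_sub_cancel_left] at this
      have hζb : |ζ y| ≤ 1 := abs_le.mpr ⟨by linarith [(hζ01 y).1], (hζ01 y).2⟩
      calc |⟪f (x + y) - f x, g (x + y) - g x⟫ * ζ y / ‖y‖ ^ ((n:ℝ) + 2*s)|
          = |⟪f (x + y) - f x, g (x + y) - g x⟫| * |ζ y| / ‖y‖ ^ ((n:ℝ) + 2*s) := by
            rw [abs_div, abs_mul, abs_of_nonneg (rpow_nonneg (norm_nonneg y) _)]
        _ ≤ (L * ‖y‖ * (H * ‖y‖ ^ α)) * 1 / ‖y‖ ^ ((n:ℝ) + 2*s) := by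
            gcongr
            · exact le_trans (abs_real_inner_le_norm _ _)
                (mul_le_mul hfb hgb (norm_nonneg _) (by positivity))
        _ = L * H * ‖y‖ ^ (1 + α - p) := by
            rw [hp, Real.rpow_sub hyp, Real.rpow_add hyp 1 α, Real.rpow_one]
            ring
  refine ⟨key, ?_⟩
  intro x hx x' hx'
  have intx := key x hx
  have intx' := key x' hx'
  set F : EuclideanSpace ℝ (Fin n) → ℝ :=
    fun y => ⟪f (x + y) - f x, g (x + y) - g x⟫ * ζ y / ‖y‖ ^ ((n:ℝ) + 2*s) with hF
  set F' : EuclideanSpace ℝ (Fin n) → ℝ :=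
    fun y => ⟪f (x' + y) - f x', g (x' + y) - g x'⟫ * ζ y / ‖y‖ ^ ((n:ℝ) + 2*s) with hF'
  rw [← integral_sub intx intx']
  have hrα : (0:ℝ) ≤ ‖x - x'‖ ^ α := rpow_nonneg (norm_nonneg _) _
  -- pointwise bound for the difference
  have hptwise : ∀ y ∈ Metric.ball (0 : EuclideanSpace ℝ (Fin n)) 1,
      |F y - F' y| ≤ (4 * L * H * ‖x - x'‖ ^ α) * ‖y‖ ^ (1 - p) := by
    intro y hy
    simp only [hF, hF']
    by_cases hy0 : y = 0
    · simp only [hy0, add_zero, sub_self, inner_zero_left, zero_mul, zero_div, sub_zero,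
        abs_zero]
      positivity
    · have hyp : (0:ℝ) < ‖y‖ := norm_pos_iff.mpr hy0
      set u := f (x + y) - f x with hu
      set u' := f (x' + y) - f x' with hu'
      set v := g (x + y) - g x with hv
      set v' := g (x' + y) - g x' with hv'
      have hxy3 := hmem x y hx hy
      have hx'y3 := hmem x' y hx' hy
      have hx3 := hmem1 x hx
      have hx'3 := hmem1 x' hx'
      have hζb : |ζ y| ≤ 1 := abs_le.mpr ⟨by linarith [(hζ01 y).1], (hζ01 y).2⟩
      have huu' : ‖u - u'‖ ≤ 2 * L * min ‖x - x'‖ ‖y‖ := by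
        rcases min_cases ‖x - x'‖ ‖y‖ with ⟨hmin, _⟩ | ⟨hmin, _⟩
        · rw [hmin]
          have h1 : ‖f (x + y) - f (x' + y)‖ ≤ L * ‖x - x'‖ := by
            have := hf (x+y) hxy3 (x'+y) hx'y3
            rwa [add_sub_add_right_eq_sub] at this
          have h2 : ‖f x - f x'‖ ≤ L * ‖x - x'‖ := hf x hx3 x' hx'3
          calc ‖u - u'‖ = ‖(f (x + y) - f (x' + y)) - (f x - f x')‖ := by
                rw [hu, hu']; congr 1; abel
            _ ≤ ‖f (x + y) - f (x' + y)‖ + ‖f x - f x'‖ := norm_sub_le _ _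
            _ ≤ 2 * L * ‖x - x'‖ := by linarith
        · rw [hmin]
          have h1 : ‖u‖ ≤ L * ‖y‖ := by
            have := hf (x+y) hxy3 x hx3
            rwa [add_sub_cancel_left] at this
          have h2 : ‖u'‖ ≤ L * ‖y‖ := by
            have := hf (x'+y) hx'y3 x' hx'3
            rwa [add_sub_cancel_left] at this
          calc ‖u - u'‖ ≤ ‖u‖ + ‖u'‖ := norm_sub_le _ _
            _ ≤ 2 * L * ‖y‖ := by linarith
      have hminb : min ‖x - x'‖ ‖y‖ ≤ ‖x - x'‖ ^ α * ‖y‖ ^ (1 - α) :=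
        stmt4_aux_min_rpow (norm_nonneg _) (norm_nonneg _) hα0.le hα2
      have hvb : ‖v‖ ≤ H * ‖y‖ ^ α := by
        have := hg (x+y) hxy3 x hx3
        rwa [add_sub_cancel_left] at this
      have hu'b : ‖u'‖ ≤ L * ‖y‖ := by
        have := hf (x'+y) hx'y3 x' hx'3
        rwa [add_sub_cancel_left] at this
      have hvv' : ‖v - v'‖ ≤ 2 * H * ‖x - x'‖ ^ α := by
        have h1 : ‖g (x + y) - g (x' + y)‖ ≤ H * ‖x - x'‖ ^ α := by
          have := hg (x+y) hxy3 (x'+y) hx'y3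
          rwa [add_sub_add_right_eq_sub] at this
        have h2 : ‖g x - g x'‖ ≤ H * ‖x - x'‖ ^ α := hg x hx3 x' hx'3
        calc ‖v - v'‖ = ‖(g (x + y) - g (x' + y)) - (g x - g x')‖ := by
              rw [hv, hv']; congr 1; abel
          _ ≤ ‖g (x + y) - g (x' + y)‖ + ‖g x - g x'‖ := norm_sub_le _ _
          _ ≤ 2 * H * ‖x - x'‖ ^ α := by linarith
      have hinner : |⟪u, v⟫ - ⟪u', v'⟫| ≤ 4 * L * H * ‖x - x'‖ ^ α * ‖y‖ := by
        have hid : ⟪u, v⟫ - ⟪u', v'⟫ = ⟪u - u', v⟫ + ⟪u', v - v'⟫ := by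
          simp only [inner_sub_left, inner_sub_right]; ring
        rw [hid]
        calc |⟪u - u', v⟫ + ⟪u', v - v'⟫| ≤ |⟪u - u', v⟫| + |⟪u', v - v'⟫| := abs_add_le _ _
          _ ≤ ‖u - u'‖ * ‖v‖ + ‖u'‖ * ‖v - v'‖ := by
              gcongr <;> exact abs_real_inner_le_norm _ _
          _ ≤ (2 * L * (‖x - x'‖ ^ α * ‖y‖ ^ (1 - α))) * (H * ‖y‖ ^ α)
              + (L * ‖y‖) * (2 * H * ‖x - x'‖ ^ α) := by
              have h1 : ‖u - u'‖ ≤ 2 * L * (‖x - x'‖ ^ α * ‖y‖ ^ (1 - α)) :=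
                huu'.trans (by nlinarith)
              have h2 : (0:ℝ) ≤ H * ‖y‖ ^ α := by positivity
              exact add_le_add
                (mul_le_mul h1 hvb (norm_nonneg _) (by positivity))
                (mul_le_mul hu'b hvv' (norm_nonneg _) (by positivity))
          _ = 2 * L * H * ‖x - x'‖ ^ α * (‖y‖ ^ (1 - α) * ‖y‖ ^ α)
              + 2 * L * H * ‖x - x'‖ ^ α * ‖y‖ := by ring
          _ = 4 * L * H * ‖x - x'‖ ^ α * ‖y‖ := by
              rw [← Real.rpow_add hyp]
              norm_num
              ring
      have hre : ⟪u, v⟫ * ζ y / ‖y‖ ^ ((n:ℝ) + 2*s) - ⟪u', v'⟫ * ζ y / ‖y‖ ^ ((n:ℝ) + 2*s)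
          = (⟪u, v⟫ - ⟪u', v'⟫) * ζ y / ‖y‖ ^ ((n:ℝ) + 2*s) := by ring
      rw [hre]
      calc |(⟪u, v⟫ - ⟪u', v'⟫) * ζ y / ‖y‖ ^ ((n:ℝ) + 2*s)|
          = |⟪u, v⟫ - ⟪u', v'⟫| * |ζ y| / ‖y‖ ^ ((n:ℝ) + 2*s) := by
            rw [abs_div, abs_mul, abs_of_nonneg (rpow_nonneg (norm_nonneg y) _)]
        _ ≤ (4 * L * H * ‖x - x'‖ ^ α * ‖y‖) * 1 / ‖y‖ ^ ((n:ℝ) + 2*s) := by gcongr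
        _ = (4 * L * H * ‖x - x'‖ ^ α) * ‖y‖ ^ (1 - p) := by
            rw [Real.rpow_sub hyp, Real.rpow_one, hp]
            ring
  calc |∫ y in Metric.ball (0:EuclideanSpace ℝ (Fin n)) 1, (F y - F' y)|
      ≤ ∫ y in Metric.ball (0:EuclideanSpace ℝ (Fin n)) 1, |F y - F' y| := by
        simpa [Real.norm_eq_abs] using
          norm_integral_le_integral_norm (μ := volume.restrict (Metric.ball (0:EuclideanSpace ℝ (Fin n)) 1))
            (fun y => F y - F' y)
    _ ≤ ∫ y in Metric.ball (0:EuclideanSpace ℝ (Fin n)) 1,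
        (4 * L * H * ‖x - x'‖ ^ α) * ‖y‖ ^ (1 - p) :=
        setIntegral_mono_on ((intx.sub intx').abs) (I2.const_mul _) measurableSet_ball hptwise
    _ = (4 * L * H * ‖x - x'‖ ^ α) * K := by rw [integral_const_mul, hK]
    _ ≤ (4*K + 1) * L * H * ‖x - x'‖ ^ α := by nlinarith [mul_nonneg (mul_nonneg hL0 hH0) hrα]
end

section
/- Let Ω ⊂ ℝ^n be open, x₀ ∈ Ω, ρ > 0 with D_ρ(x₀) ⊂ Ω. There exists C = C(ρ,n,s) > 0 such that for every measurable u : ℝ^n → ℝ with finite energy E_s(u, D_ρ(x₀)) and u ∈ L²(D_ρ(x₀)): ∫_{ℝ^n} |u(x)|²/(|x-x₀|+1)^{n+2s} dx ≤ C (E_s(u, D_ρ(x₀)) + ‖u‖²_{L²(D_ρ(x₀))}). -/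
open MeasureTheory Real
open scoped ENNReal

/-- The normalization constant `γ_{n,s}` for the fractional Sobolev seminorm. -/
noncomputable def gammaConst (n : ℕ) (s : ℝ) : ℝ :=
  s * 2 ^ (2 * s) * Real.pi ^ (-(n : ℝ) / 2) * Real.Gamma (((n : ℝ) + 2 * s) / 2) /
    Real.Gamma (1 - s)

set_option maxHeartbeats 1600000 in
theorem stmt_6 (n : ℕ) (s ρ : ℝ) (hs : s ∈ Set.Ioo (0:ℝ) 1) (hρ : 0 < ρ) :
    ∃ C : ℝ, 0 < C ∧
      ∀ (x₀ : EuclideanSpace ℝ (Fin n)) (u : EuclideanSpace ℝ (Fin n) → ℝ),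
        Measurable u →
        (∫⁻ x, ENNReal.ofReal ((u x) ^ 2 / (‖x - x₀‖ + 1) ^ ((n:ℝ) + 2*s))) ≤
          ENNReal.ofReal C *
            ((∫⁻ p in {p : EuclideanSpace ℝ (Fin n) × EuclideanSpace ℝ (Fin n) |
                p.1 ∈ Metric.ball x₀ ρ ∨ p.2 ∈ Metric.ball x₀ ρ},
                ENNReal.ofReal (gammaConst n s / 4 *
                  (u p.1 - u p.2) ^ 2 / ‖p.1 - p.2‖ ^ ((n:ℝ) + 2*s))) +
              ∫⁻ x in Metric.ball x₀ ρ, ENNReal.ofReal ((u x) ^ 2)) := by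
  obtain ⟨hs0, hs1⟩ := hs
  set r : ℝ := (n:ℝ) + 2*s with hrdef
  have hr0 : 0 < r := by positivity
  have hγ : 0 < gammaConst n s := by
    have h1 : 0 < Real.Gamma (((n:ℝ) + 2*s)/2) := Real.Gamma_pos_of_pos (by positivity)
    have h2 : 0 < Real.Gamma (1 - s) := Real.Gamma_pos_of_pos (by linarith)
    unfold gammaConst
    positivity
  set I : ℝ≥0∞ := ∫⁻ x : EuclideanSpace ℝ (Fin n), ENNReal.ofReal ((1 + ‖x‖) ^ (-r)) with hIdef
  have hI : I < ⊤ := by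
    refine finite_integral_one_add_norm ?_
    rw [finrank_euclideanSpace_fin, hrdef]
    linarith
  set m : ℝ≥0∞ := volume (Metric.ball (0 : EuclideanSpace ℝ (Fin n)) ρ) with hmdef
  have hm0 : m ≠ 0 := (Metric.measure_ball_pos _ _ hρ).ne'
  have hmt : m ≠ ⊤ := measure_ball_lt_top.ne
  have hmR : 0 < m.toReal := ENNReal.toReal_pos hm0 hmt
  set A : ℝ := 8 * (1 + ρ) ^ r / gammaConst n s with hAdef
  have hA0 : 0 < A := by positivity
  set K : ℝ := max A (2 * I.toReal) with hKdef
  have hK0 : 0 < K := lt_max_of_lt_left hA0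
  refine ⟨K / m.toReal, div_pos hK0 hmR, ?_⟩
  intro x₀ u hu
  set B := Metric.ball x₀ ρ with hBdef
  have hvolB : volume B = m := Measure.addHaar_ball_center volume x₀ ρ
  set c : EuclideanSpace ℝ (Fin n) → ℝ := fun x => (1 + ‖x - x₀‖) ^ (-r) with hcdef
  have hc_cont : Continuous c := by
    apply Continuous.rpow_const
    · exact continuous_const.add (continuous_id.sub continuous_const).norm
    · intro x
      left
      positivity
  set L2 : ℝ≥0∞ := ∫⁻ x in B, ENNReal.ofReal (u x ^ 2) with hL2def
  set Et : ℝ≥0∞ := ∫⁻ p in {p : EuclideanSpace ℝ (Fin n) × EuclideanSpace ℝ (Fin n) |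
      p.1 ∈ B ∨ p.2 ∈ B},
      ENNReal.ofReal (gammaConst n s / 4 * (u p.1 - u p.2) ^ 2 / ‖p.1 - p.2‖ ^ r) with hEtdef
  set L : ℝ≥0∞ := ∫⁻ x, ENNReal.ofReal (u x ^ 2 / (‖x - x₀‖ + 1) ^ r) with hLdef
  -- pointwise real inequality
  have key : ∀ x y, y ∈ B →
      u x ^ 2 / (‖x - x₀‖ + 1) ^ r ≤
        A * (gammaConst n s / 4 * (u x - u y) ^ 2 / ‖x - y‖ ^ r) + 2 * u y ^ 2 * c x := by
    intro x y hy
    have hb : (0:ℝ) < ‖x - x₀‖ + 1 := by positivity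
    have hw : (0:ℝ) < (‖x - x₀‖ + 1) ^ r := Real.rpow_pos_of_pos hb r
    have hc_eq : c x = ((‖x - x₀‖ + 1) ^ r)⁻¹ := by
      rw [hcdef]
      simp only
      rw [add_comm 1, Real.rpow_neg (by positivity)]
    have h1 : u x ^ 2 ≤ 2 * (u x - u y) ^ 2 + 2 * u y ^ 2 := by
      nlinarith [sq_nonneg (u x - 2 * u y)]
    have h2 : 2 * (u x - u y) ^ 2 / (‖x - x₀‖ + 1) ^ r ≤
        A * (gammaConst n s / 4 * (u x - u y) ^ 2 / ‖x - y‖ ^ r) := by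
      rcases eq_or_ne x y with h | h
      · subst h
        simp
      · have hxy : (0:ℝ) < ‖x - y‖ := by
          rw [norm_pos_iff]; exact sub_ne_zero.mpr h
        have hy' : ‖x₀ - y‖ < ρ := by
          rw [← dist_eq_norm]
          exact Metric.mem_ball'.mp hy
        have hle : ‖x - y‖ ≤ (1 + ρ) * (‖x - x₀‖ + 1) := by
          have htri : ‖x - y‖ ≤ ‖x - x₀‖ + ‖x₀ - y‖ := norm_sub_le_norm_sub_add_norm_sub x x₀ y
          nlinarith [norm_nonneg (x - x₀)]
        have hpow : ‖x - y‖ ^ r ≤ (1 + ρ) ^ r * (‖x - x₀‖ + 1) ^ r := by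
          rw [← Real.mul_rpow (by linarith) hb.le]
          exact Real.rpow_le_rpow hxy.le hle hr0.le
        have hxyr : (0:ℝ) < ‖x - y‖ ^ r := Real.rpow_pos_of_pos hxy r
        have hVA : A * (gammaConst n s / 4 * (u x - u y) ^ 2 / ‖x - y‖ ^ r)
            = 2 * (1 + ρ) ^ r * (u x - u y) ^ 2 / ‖x - y‖ ^ r := by
          rw [hAdef]; field_simp; ring
        rw [hVA, div_le_div_iff₀ hw hxyr]
        calc 2 * (u x - u y) ^ 2 * ‖x - y‖ ^ r
            ≤ 2 * (u x - u y) ^ 2 * ((1 + ρ) ^ r * (‖x - x₀‖ + 1) ^ r) := by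
              apply mul_le_mul_of_nonneg_left hpow (by positivity)
          _ = 2 * (1 + ρ) ^ r * (u x - u y) ^ 2 * (‖x - x₀‖ + 1) ^ r := by ring
    have h3 : 2 * u y ^ 2 / (‖x - x₀‖ + 1) ^ r = 2 * u y ^ 2 * c x := by
      rw [hc_eq, div_eq_mul_inv]
    calc u x ^ 2 / (‖x - x₀‖ + 1) ^ r
        ≤ (2 * (u x - u y) ^ 2 + 2 * u y ^ 2) / (‖x - x₀‖ + 1) ^ r := by
          gcongr
      _ = 2 * (u x - u y) ^ 2 / (‖x - x₀‖ + 1) ^ r + 2 * u y ^ 2 / (‖x - x₀‖ + 1) ^ r := by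
          ring
      _ ≤ A * (gammaConst n s / 4 * (u x - u y) ^ 2 / ‖x - y‖ ^ r) + 2 * u y ^ 2 * c x :=
          add_le_add h2 (le_of_eq h3)
  have keyE : ∀ x y, y ∈ B →
      ENNReal.ofReal (u x ^ 2 / (‖x - x₀‖ + 1) ^ r) ≤
        ENNReal.ofReal (A * (gammaConst n s / 4 * (u x - u y) ^ 2 / ‖x - y‖ ^ r)) +
          ENNReal.ofReal (2 * u y ^ 2 * c x) := fun x y hy =>
    (ENNReal.ofReal_le_ofReal (key x y hy)).trans ENNReal.ofReal_add_le
  -- measurability facts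
  have hnorm_meas : Measurable fun p : EuclideanSpace ℝ (Fin n) × EuclideanSpace ℝ (Fin n) =>
      ‖p.1 - p.2‖ ^ r := by
    apply Continuous.measurable
    apply Continuous.rpow_const (continuous_fst.sub continuous_snd).norm
    intro x
    right
    exact hr0.le
  have hq_meas : Measurable fun p : EuclideanSpace ℝ (Fin n) × EuclideanSpace ℝ (Fin n) =>
      ENNReal.ofReal (gammaConst n s / 4 * (u p.1 - u p.2) ^ 2 / ‖p.1 - p.2‖ ^ r) := by
    apply ENNReal.measurable_ofReal.comp
    exact (measurable_const.mul (((hu.comp measurable_fst).sub (hu.comp measurable_snd)).pow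
      measurable_const)).div hnorm_meas
  have hT1meas : ∀ x, Measurable fun y =>
      ENNReal.ofReal (A * (gammaConst n s / 4 * (u x - u y) ^ 2 / ‖x - y‖ ^ r)) := by
    intro x
    have : Measurable fun y : EuclideanSpace ℝ (Fin n) =>
        ENNReal.ofReal (gammaConst n s / 4 * (u x - u y) ^ 2 / ‖x - y‖ ^ r) :=
      hq_meas.comp (measurable_const.prodMk measurable_id)
    simpa [ENNReal.ofReal_mul hA0.le] using (this.const_mul (ENNReal.ofReal A))
  -- step 2 : pointwise in x after integrating in y over B
  have step2 : ∀ x, m * ENNReal.ofReal (u x ^ 2 / (‖x - x₀‖ + 1) ^ r) ≤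
      (∫⁻ y in B, ENNReal.ofReal (A * (gammaConst n s / 4 * (u x - u y) ^ 2 / ‖x - y‖ ^ r))) +
        ENNReal.ofReal (c x) * (2 * L2) := by
    intro x
    have h0 : m * ENNReal.ofReal (u x ^ 2 / (‖x - x₀‖ + 1) ^ r)
        = ∫⁻ _ in B, ENNReal.ofReal (u x ^ 2 / (‖x - x₀‖ + 1) ^ r) := by
      rw [setLIntegral_const, hvolB, mul_comm]
    rw [h0]
    have hsum_meas : Measurable fun y =>
        ENNReal.ofReal (A * (gammaConst n s / 4 * (u x - u y) ^ 2 / ‖x - y‖ ^ r)) +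
          ENNReal.ofReal (2 * u y ^ 2 * c x) := by
      apply (hT1meas x).add
      exact ENNReal.measurable_ofReal.comp
        ((measurable_const.mul (hu.pow measurable_const)).mul measurable_const)
    calc (∫⁻ _ in B, ENNReal.ofReal (u x ^ 2 / (‖x - x₀‖ + 1) ^ r))
        ≤ ∫⁻ y in B, (ENNReal.ofReal (A * (gammaConst n s / 4 * (u x - u y) ^ 2 / ‖x - y‖ ^ r)) +
            ENNReal.ofReal (2 * u y ^ 2 * c x)) :=
          setLIntegral_mono hsum_meas (fun y hy => keyE x y hy)
      _ = (∫⁻ y in B, ENNReal.ofReal (A * (gammaConst n s / 4 * (u x - u y) ^ 2 / ‖x - y‖ ^ r))) +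
          ∫⁻ y in B, ENNReal.ofReal (2 * u y ^ 2 * c x) := lintegral_add_left (hT1meas x) _
      _ = (∫⁻ y in B, ENNReal.ofReal (A * (gammaConst n s / 4 * (u x - u y) ^ 2 / ‖x - y‖ ^ r))) +
          ENNReal.ofReal (c x) * (2 * L2) := by
          congr 1
          have : ∀ y, ENNReal.ofReal (2 * u y ^ 2 * c x)
              = 2 * ENNReal.ofReal (u y ^ 2) * ENNReal.ofReal (c x) := by
            intro y
            rw [ENNReal.ofReal_mul (by positivity), ENNReal.ofReal_mul (by norm_num)]
            norm_num
          simp_rw [this]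
          have hmeas2 : Measurable fun y => 2 * ENNReal.ofReal (u y ^ 2) :=
            ((hu.pow measurable_const).ennreal_ofReal).const_mul 2
          rw [lintegral_mul_const _ hmeas2, lintegral_const_mul' 2 _ (by norm_num),
            ← hL2def]
          ring
  -- main estimate
  have hprod_le : (∫⁻ x, ∫⁻ y in B,
      ENNReal.ofReal (gammaConst n s / 4 * (u x - u y) ^ 2 / ‖x - y‖ ^ r)) ≤ Et := by
    have heq : (∫⁻ p in Set.univ ×ˢ B,
        ENNReal.ofReal (gammaConst n s / 4 * (u p.1 - u p.2) ^ 2 / ‖p.1 - p.2‖ ^ r))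
        = ∫⁻ x, ∫⁻ y in B,
            ENNReal.ofReal (gammaConst n s / 4 * (u x - u y) ^ 2 / ‖x - y‖ ^ r) := by
      rw [Measure.volume_eq_prod, ← Measure.prod_restrict, Measure.restrict_univ]
      exact lintegral_prod _ hq_meas.aemeasurable
    rw [← heq, hEtdef]
    apply lintegral_mono_set
    rintro ⟨p1, p2⟩ ⟨-, hp2⟩
    exact Or.inr hp2
  have hIc : (∫⁻ x, ENNReal.ofReal (c x)) = I := by
    rw [hcdef, hIdef]
    exact lintegral_sub_right_eq_self
      (fun z => ENNReal.ofReal ((1 + ‖z‖) ^ (-r))) x₀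
  have main : L * m ≤ ENNReal.ofReal K * (Et + L2) := by
    have hT2meas : Measurable fun x => ENNReal.ofReal (c x) * (2 * L2) :=
      (ENNReal.measurable_ofReal.comp hc_cont.measurable).mul_const _
    calc L * m = m * L := mul_comm _ _
      _ = ∫⁻ x, m * ENNReal.ofReal (u x ^ 2 / (‖x - x₀‖ + 1) ^ r) :=
          (lintegral_const_mul' m _ hmt).symm
      _ ≤ ∫⁻ x, ((∫⁻ y in B,
            ENNReal.ofReal (A * (gammaConst n s / 4 * (u x - u y) ^ 2 / ‖x - y‖ ^ r))) +
            ENNReal.ofReal (c x) * (2 * L2)) := lintegral_mono step2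
      _ = (∫⁻ x, ∫⁻ y in B,
            ENNReal.ofReal (A * (gammaConst n s / 4 * (u x - u y) ^ 2 / ‖x - y‖ ^ r))) +
          ∫⁻ x, ENNReal.ofReal (c x) * (2 * L2) := lintegral_add_right _ hT2meas
      _ ≤ ENNReal.ofReal A * Et + ENNReal.ofReal (2 * I.toReal) * L2 := by
          apply add_le_add
          · have hpull : ∀ x, (∫⁻ y in B,
                ENNReal.ofReal (A * (gammaConst n s / 4 * (u x - u y) ^ 2 / ‖x - y‖ ^ r)))
                = ENNReal.ofReal A * ∫⁻ y in B,
                    ENNReal.ofReal (gammaConst n s / 4 * (u x - u y) ^ 2 / ‖x - y‖ ^ r) := by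
              intro x
              simp_rw [ENNReal.ofReal_mul hA0.le]
              exact lintegral_const_mul' _ _ ENNReal.ofReal_ne_top
            simp_rw [hpull]
            rw [lintegral_const_mul' _ _ ENNReal.ofReal_ne_top]
            exact mul_le_mul_right hprod_le _
          · have hcm : Measurable fun x => ENNReal.ofReal (c x) :=
              hc_cont.measurable.ennreal_ofReal
            rw [lintegral_mul_const _ hcm, hIc,
              ENNReal.ofReal_mul (by norm_num : (0:ℝ) ≤ 2), ENNReal.ofReal_toReal hI.ne]
            rw [show ENNReal.ofReal 2 = 2 by norm_num]
            exact le_of_eq (by ring)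
      _ ≤ ENNReal.ofReal K * Et + ENNReal.ofReal K * L2 := by
          apply add_le_add
          · exact mul_le_mul_left (ENNReal.ofReal_le_ofReal (le_max_left _ _)) _
          · exact mul_le_mul_left (ENNReal.ofReal_le_ofReal (le_max_right _ _)) _
      _ = ENNReal.ofReal K * (Et + L2) := (mul_add _ _ _).symm
  have hfin : L ≤ ENNReal.ofReal K * (Et + L2) / m :=
    (ENNReal.le_div_iff_mul_le (Or.inl hm0) (Or.inl hmt)).mpr main
  refine hfin.trans_eq ?_
  have hCK : ENNReal.ofReal (K / m.toReal) = ENNReal.ofReal K / m := by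
    rw [ENNReal.ofReal_div_of_pos hmR, ENNReal.ofReal_toReal hmt]
  rw [hCK, div_eq_mul_inv, div_eq_mul_inv]
  ring
end

section
/- Assume n = 1, s ∈ (1/2, 1), and let u ∈ Ĥ^s(D_R; ℝ^d). Then u is (s-1/2)-Hölder continuous on D_{R/2} and R^{2s-1}[u]²_{C^{0,s-1/2}(D_{R/2})} ≤ C(s) · R^{2s-1} E_s(u, D_R), i.e., [u]²_{C^{0,s-1/2}(D_{R/2})} ≤ C(s) E_s(u,D_R). -/
set_option linter.unusedSectionVars false
set_option linter.unusedVariables false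
set_option maxHeartbeats 1600000

open MeasureTheory Real

section Aux

open Set Filter

variable {α : Type*} [MeasurableSpace α] {μ : Measure α}
variable {V : Type*} [NormedAddCommGroup V] [NormedSpace ℝ V]


variable {α : Type*} [MeasurableSpace α] {μ : Measure α}
variable {V : Type*} [NormedAddCommGroup V] [NormedSpace ℝ V]

/-- Cauchy–Schwarz / Jensen: squared norm of an integral. -/
lemma sq_norm_integral_le [IsFiniteMeasure μ] {f : α → V} (hf : Integrable f μ)
    (hf2 : Integrable (fun a => ‖f a‖ ^ 2) μ) :
    ‖∫ a, f a ∂μ‖ ^ 2 ≤ (μ Set.univ).toReal * ∫ a, ‖f a‖ ^ 2 ∂μ := by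
  set m : ℝ := (μ Set.univ).toReal with hm
  have hm0 : 0 ≤ m := ENNReal.toReal_nonneg
  rcases eq_or_lt_of_le hm0 with h0 | hmpos
  · have : μ = 0 := by
      have := (ENNReal.toReal_eq_zero_iff _).1 h0.symm
      rcases this with h | h
      · exact Measure.measure_univ_eq_zero.1 h
      · exact absurd h (measure_ne_top μ _)
    simp [this]
  set I : ℝ := ∫ a, ‖f a‖ ∂μ with hI
  have hIint : Integrable (fun a => ‖f a‖) μ := hf.norm
  have h1 : Integrable (fun a => m ^ 2 * ‖f a‖ ^ 2) μ := hf2.const_mul _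
  have h2 : Integrable (fun a => 2 * m * I * ‖f a‖) μ := hIint.const_mul _
  have expand : ∫ a, (m * ‖f a‖ - I) ^ 2 ∂μ
      = m ^ 2 * ∫ a, ‖f a‖ ^ 2 ∂μ - 2 * m * I * I + I ^ 2 * m := by
    have : (fun a => (m * ‖f a‖ - I) ^ 2)
        = fun a => m ^ 2 * ‖f a‖ ^ 2 - 2 * m * I * ‖f a‖ + I ^ 2 := by
      funext a; ring
    have h12 : Integrable (fun a => m ^ 2 * ‖f a‖ ^ 2 - 2 * m * I * ‖f a‖) μ := h1.sub h2
    rw [this, integral_add h12 (integrable_const _), integral_sub h1 h2,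
      integral_const_mul, integral_const_mul, integral_const, smul_eq_mul, ← hI, measureReal_def, ← hm]
    ring
  have key : 0 ≤ ∫ a, (m * ‖f a‖ - I) ^ 2 ∂μ := integral_nonneg fun a => sq_nonneg _
  rw [expand] at key
  have hIsq : I ^ 2 ≤ m * ∫ a, ‖f a‖ ^ 2 ∂μ := by nlinarith
  have hnorm : ‖∫ a, f a ∂μ‖ ≤ I := norm_integral_le_integral_norm f
  calc ‖∫ a, f a ∂μ‖ ^ 2 ≤ I ^ 2 := by
        have := norm_nonneg (∫ a, f a ∂μ); nlinarith
    _ ≤ m * ∫ a, ‖f a‖ ^ 2 ∂μ := hIsq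





variable {d : ℕ} {s R : ℝ}

lemma pointwise_sq_le (u : ℝ → EuclideanSpace ℝ (Fin d)) {a b M e : ℝ}
    (hab : |a - b| ≤ M) (he : 0 < e) :
    ‖u a - u b‖ ^ 2 ≤ M ^ e * (‖u a - u b‖ ^ 2 / |a - b| ^ e) := by
  rcases eq_or_ne a b with h | h
  · simp [h]
  · have habs : 0 < |a - b| := abs_pos.2 (sub_ne_zero.2 h)
    have hd : 0 < |a - b| ^ e := Real.rpow_pos_of_pos habs e
    have hMe : |a - b| ^ e ≤ M ^ e := Real.rpow_le_rpow (abs_nonneg _) hab he.le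
    calc ‖u a - u b‖ ^ 2 = ‖u a - u b‖ ^ 2 / |a - b| ^ e * |a - b| ^ e :=
          (div_mul_cancel₀ _ hd.ne').symm
      _ ≤ ‖u a - u b‖ ^ 2 / |a - b| ^ e * M ^ e :=
          mul_le_mul_of_nonneg_left hMe (by positivity)
      _ = M ^ e * (‖u a - u b‖ ^ 2 / |a - b| ^ e) := by ring

lemma l2_of_energy (hs1 : 1/2 < s) (hR : 0 < R)
    (u : ℝ → EuclideanSpace ℝ (Fin d)) (hu : Measurable u)
    (hInt : IntegrableOn
      (fun p : ℝ × ℝ => ‖u p.1 - u p.2‖ ^ 2 / |p.1 - p.2| ^ (1 + 2*s))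
      {p : ℝ × ℝ | p.1 ∈ Set.Ioo (-R) R ∨ p.2 ∈ Set.Ioo (-R) R}) :
    IntegrableOn (fun a => ‖u a‖ ^ 2) (Set.Ioo (-R) R) ∧
      IntegrableOn u (Set.Ioo (-R) R) := by
  have he : (0:ℝ) < 1 + 2*s := by linarith
  set D : Set ℝ := Set.Ioo (-R) R with hD
  have hDm : MeasurableSet D := measurableSet_Ioo
  have hDvol : volume D < ⊤ := by
    rw [hD, Real.volume_Ioo]; exact ENNReal.ofReal_lt_top
  have hsub : D ×ˢ D ⊆ {p : ℝ × ℝ | p.1 ∈ Set.Ioo (-R) R ∨ p.2 ∈ Set.Ioo (-R) R} :=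
    fun p hp => Or.inl hp.1
  have hFBB := hInt.mono_set hsub
  have hGmeas : Measurable fun p : ℝ × ℝ => ‖u p.1 - u p.2‖ ^ 2 :=
    (((hu.comp measurable_fst).sub (hu.comp measurable_snd)).norm).pow_const 2
  have hGint : IntegrableOn (fun p : ℝ × ℝ => ‖u p.1 - u p.2‖ ^ 2) (D ×ˢ D) := by
    refine Integrable.mono' (hFBB.const_mul ((2*R) ^ (1+2*s))) hGmeas.aestronglyMeasurable.restrict ?_
    rw [ae_restrict_iff' (hDm.prod hDm)]
    filter_upwards with p hp
    rw [Real.norm_of_nonneg (by positivity)]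
    refine pointwise_sq_le u ?_ he
    have h1 : |p.1| < R := abs_lt.2 ⟨hp.1.1, hp.1.2⟩
    have h2 : |p.2| < R := abs_lt.2 ⟨hp.2.1, hp.2.2⟩
    calc |p.1 - p.2| ≤ |p.1| + |p.2| := abs_sub _ _
      _ ≤ 2*R := by linarith
  have hprod : Integrable (fun p : ℝ × ℝ => ‖u p.1 - u p.2‖ ^ 2)
      ((volume.restrict D).prod (volume.restrict D)) := by
    rw [Measure.prod_restrict]
    rwa [IntegrableOn, Measure.volume_eq_prod] at hGint
  have hae := hprod.prod_left_ae
  haveI : (ae (volume.restrict D)).NeBot := by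
    rw [ae_neBot]
    intro h
    have h2 := congrArg (fun μ : Measure ℝ => μ D) h
    simp only [Measure.restrict_apply_self, Measure.coe_zero, Pi.zero_apply] at h2
    rw [hD, Real.volume_Ioo] at h2
    have : (0:ℝ) < R - -R := by linarith
    rw [ENNReal.ofReal_eq_zero] at h2
    linarith
  obtain ⟨b₀, hb₀⟩ := hae.exists
  have hconst : IntegrableOn (fun _ : ℝ => 2 * ‖u b₀‖ ^ 2) D volume :=
    integrableOn_const hDvol.ne
  have hb₀' : IntegrableOn (fun a : ℝ => 2 * ‖u a - u b₀‖ ^ 2) D volume := hb₀.const_mul 2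
  have hsq : IntegrableOn (fun a => ‖u a‖ ^ 2) D := by
    refine Integrable.mono' (hb₀'.add hconst) ?_ ?_
    · exact ((hu.norm).pow_const 2).aestronglyMeasurable.restrict
    · filter_upwards with a
      simp only [Pi.add_apply]
      have h := norm_sub_le (u a) (u b₀)
      have h1 := norm_nonneg (u a)
      have h2 := norm_nonneg (u b₀)
      have h3 := norm_nonneg (u a - u b₀)
      rw [Real.norm_of_nonneg (by positivity)]
      have h4 : ‖u a‖ ≤ ‖u a - u b₀‖ + ‖u b₀‖ := by
        calc ‖u a‖ = ‖(u a - u b₀) + u b₀‖ := by rw [sub_add_cancel]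
          _ ≤ ‖u a - u b₀‖ + ‖u b₀‖ := norm_add_le _ _
      nlinarith [mul_self_le_mul_self h1 h4, sq_nonneg (‖u a - u b₀‖ - ‖u b₀‖)]
  refine ⟨hsq, ?_⟩
  have hone : IntegrableOn (fun _ : ℝ => (1:ℝ)) D volume := integrableOn_const hDvol.ne
  refine Integrable.mono' (hsq.add hone) hu.aestronglyMeasurable.restrict ?_
  filter_upwards with a
  simp only [Pi.add_apply]
  nlinarith [sq_nonneg (‖u a‖ - 1), norm_nonneg (u a)]

lemma integrable_norm_sq_sub' [IsFiniteMeasure μ] {f : α → V}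
    (hmeas : AEStronglyMeasurable f μ)
    (h2 : Integrable (fun a => ‖f a‖ ^ 2) μ) (c : V) :
    Integrable (fun a => ‖f a - c‖ ^ 2) μ := by
  have hconst : Integrable (fun _ : α => 2 * ‖c‖ ^ 2) μ := integrable_const _
  refine Integrable.mono' ((h2.const_mul 2).add hconst) ?_ ?_
  · exact ((hmeas.sub aestronglyMeasurable_const).norm.pow 2)
  · filter_upwards with a
    simp only [Pi.add_apply]
    have h := norm_sub_le (f a) c
    rw [Real.norm_of_nonneg (by positivity)]
    nlinarith [mul_self_le_mul_self (norm_nonneg (f a - c)) h, sq_nonneg (‖c‖ - ‖f a‖),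
      norm_nonneg (f a), norm_nonneg c, norm_nonneg (f a - c)]

/-- The average of `u` over the interval `(x - ρ, x + ρ)`. -/
noncomputable def avgI {d : ℕ} (u : ℝ → EuclideanSpace ℝ (Fin d)) (x ρ : ℝ) :
    EuclideanSpace ℝ (Fin d) :=
  (2 * ρ)⁻¹ • ∫ a in Set.Ioo (x - ρ) (x + ρ), u a

/-- Jensen-type estimate: squared distance from average to a constant. -/
lemma avg_sub_sq_le [CompleteSpace V] {B : Set ℝ} (hBm : MeasurableSet B) {f : ℝ → V} {m : ℝ} (hm0 : 0 < m)
    (hm : (volume B).toReal = m)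
    (hf : IntegrableOn f B) (hf2 : IntegrableOn (fun a => ‖f a‖ ^ 2) B) (c : V) :
    ‖(m⁻¹ • ∫ a in B, f a) - c‖ ^ 2 ≤ m⁻¹ * ∫ a in B, ‖f a - c‖ ^ 2 := by
  have hfin : volume B ≠ ⊤ := by
    intro h; rw [h] at hm; simp at hm; linarith
  haveI : IsFiniteMeasure (volume.restrict B) :=
    ⟨by rw [Measure.restrict_apply_univ]; exact lt_top_iff_ne_top.2 hfin⟩
  have hmass : ((volume.restrict B) Set.univ).toReal = m := by
    rw [Measure.restrict_apply_univ]; exact hm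
  have hconst : IntegrableOn (fun _ : ℝ => c) B volume :=
    integrableOn_const hfin
  have hsub : IntegrableOn (fun a => f a - c) B volume := hf.sub hconst
  have hsub2 : IntegrableOn (fun a => ‖f a - c‖ ^ 2) B volume :=
    integrable_norm_sq_sub' hf.aestronglyMeasurable hf2 c
  have key : (m⁻¹ • ∫ a in B, f a) - c = m⁻¹ • ∫ a in B, (f a - c) := by
    rw [integral_sub hf hconst, setIntegral_const, measureReal_def, smul_sub, hm, smul_smul,
      inv_mul_cancel₀ hm0.ne', one_smul]
  rw [key, norm_smul, Real.norm_of_nonneg (inv_nonneg.2 hm0.le), mul_pow]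
  have h := sq_norm_integral_le (μ := volume.restrict B) hsub hsub2
  rw [hmass] at h
  calc m⁻¹ ^ 2 * ‖∫ a in B, (f a - c)‖ ^ 2
      ≤ m⁻¹ ^ 2 * (m * ∫ a in B, ‖f a - c‖ ^ 2) :=
        mul_le_mul_of_nonneg_left h (by positivity)
    _ = m⁻¹ * ∫ a in B, ‖f a - c‖ ^ 2 := by field_simp

/-- The key comparison estimate between two interval averages (Lemma A). -/
lemma lemA {d : ℕ} {s R : ℝ} (hs1 : 1/2 < s) (hR : 0 < R)
    (u : ℝ → EuclideanSpace ℝ (Fin d)) (hu : Measurable u)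
    (hInt : IntegrableOn
      (fun p : ℝ × ℝ => ‖u p.1 - u p.2‖ ^ 2 / |p.1 - p.2| ^ (1 + 2*s))
      {p : ℝ × ℝ | p.1 ∈ Set.Ioo (-R) R ∨ p.2 ∈ Set.Ioo (-R) R})
    (hu2R : IntegrableOn (fun a => ‖u a‖ ^ 2) (Set.Ioo (-R) R))
    (hu1R : IntegrableOn u (Set.Ioo (-R) R))
    {x y ρ ρ' : ℝ} (hρ : 0 < ρ) (hρ' : 0 < ρ')
    (hx : Set.Ioo (x - ρ) (x + ρ) ⊆ Set.Ioo (-R) R)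
    (hy : Set.Ioo (y - ρ') (y + ρ') ⊆ Set.Ioo (-R) R) :
    ‖avgI u x ρ - avgI u y ρ'‖ ^ 2 ≤
      (|x - y| + ρ + ρ') ^ (1 + 2*s) / (4 * ρ * ρ') *
        ∫ p in {p : ℝ × ℝ | p.1 ∈ Set.Ioo (-R) R ∨ p.2 ∈ Set.Ioo (-R) R},
          ‖u p.1 - u p.2‖ ^ 2 / |p.1 - p.2| ^ (1 + 2*s) := by
  have he : (0:ℝ) < 1 + 2*s := by linarith
  set e : ℝ := 1 + 2*s with hedef
  set B : Set ℝ := Set.Ioo (x - ρ) (x + ρ) with hB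
  set B' : Set ℝ := Set.Ioo (y - ρ') (y + ρ') with hB'
  set M : ℝ := |x - y| + ρ + ρ' with hM
  have hM0 : 0 < M := by have := abs_nonneg (x - y); positivity
  set S : Set (ℝ × ℝ) := {p : ℝ × ℝ | p.1 ∈ Set.Ioo (-R) R ∨ p.2 ∈ Set.Ioo (-R) R} with hS
  set F : ℝ × ℝ → ℝ := fun p => ‖u p.1 - u p.2‖ ^ 2 / |p.1 - p.2| ^ e with hF
  set G : ℝ × ℝ → ℝ := fun p => ‖u p.1 - u p.2‖ ^ 2 with hG
  set EE : ℝ := ∫ p in S, F p with hEE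
  have hBm : MeasurableSet B := measurableSet_Ioo
  have hB'm : MeasurableSet B' := measurableSet_Ioo
  have hvolB : (volume B).toReal = 2 * ρ := by
    rw [hB, Real.volume_Ioo, ENNReal.toReal_ofReal (by linarith)]; ring
  have hvolB' : (volume B').toReal = 2 * ρ' := by
    rw [hB', Real.volume_Ioo, ENNReal.toReal_ofReal (by linarith)]; ring
  have hu1B : IntegrableOn u B := hu1R.mono_set hx
  have hu2B : IntegrableOn (fun a => ‖u a‖ ^ 2) B := hu2R.mono_set hx
  have hu1B' : IntegrableOn u B' := hu1R.mono_set hy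
  have hu2B' : IntegrableOn (fun a => ‖u a‖ ^ 2) B' := hu2R.mono_set hy
  -- bound |a - b| on B × B'
  have habM : ∀ p : ℝ × ℝ, p ∈ B ×ˢ B' → |p.1 - p.2| ≤ M := by
    rintro ⟨a, b⟩ ⟨ha, hb⟩
    have h1 : |a - x| ≤ ρ := le_of_lt (abs_lt.2 ⟨by linarith [ha.1], by linarith [ha.2]⟩)
    have h2 : |b - y| ≤ ρ' := le_of_lt (abs_lt.2 ⟨by linarith [hb.1], by linarith [hb.2]⟩)
    have key : a - b = (a - x) + (x - y) + (y - b) := by ring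
    calc |a - b| = |(a - x) + (x - y) + (y - b)| := by rw [← key]
      _ ≤ |(a - x) + (x - y)| + |y - b| := abs_add_le _ _
      _ ≤ |a - x| + |x - y| + |y - b| := by linarith [abs_add_le (a - x) (x - y)]
      _ ≤ M := by rw [abs_sub_comm y b]; rw [hM]; linarith
  -- integrability of F and G on B ×ˢ B'
  have hsubS : B ×ˢ B' ⊆ S := fun p hp => Or.inl (hx hp.1)
  have hFBB : IntegrableOn F (B ×ˢ B') := hInt.mono_set hsubS
  have hGmeas : Measurable G :=
    (((hu.comp measurable_fst).sub (hu.comp measurable_snd)).norm).pow_const 2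
  have hGBB : IntegrableOn G (B ×ˢ B') := by
    refine Integrable.mono' (hFBB.const_mul (M ^ e)) hGmeas.aestronglyMeasurable.restrict ?_
    rw [ae_restrict_iff' (hBm.prod hB'm)]
    filter_upwards with p hp
    rw [Real.norm_of_nonneg (by positivity)]
    exact pointwise_sq_le u (habM p hp) he
  -- product measure versions
  have hGprod : Integrable G ((volume.restrict B).prod (volume.restrict B')) := by
    rw [Measure.prod_restrict]
    rwa [IntegrableOn, Measure.volume_eq_prod] at hGBB
  -- the function h b = ∫ a in B, ‖u a - u b‖²
  have hhint : Integrable (fun b => ∫ a in B, ‖u a - u b‖ ^ 2) (volume.restrict B') := by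
    have := hGprod.integral_prod_right
    exact this
  -- step 1
  have havg' : avgI u y ρ' = (2 * ρ')⁻¹ • ∫ a in B', u a := rfl
  have step1 : ‖avgI u x ρ - avgI u y ρ'‖ ^ 2 ≤
      (2 * ρ')⁻¹ * ∫ b in B', ‖u b - avgI u x ρ‖ ^ 2 := by
    rw [norm_sub_rev]
    exact avg_sub_sq_le hB'm (by linarith) hvolB' hu1B' hu2B' (avgI u x ρ)
  -- step 2
  have step2 : ∀ b : ℝ, ‖u b - avgI u x ρ‖ ^ 2 ≤
      (2 * ρ)⁻¹ * ∫ a in B, ‖u a - u b‖ ^ 2 := by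
    intro b
    rw [norm_sub_rev]
    exact avg_sub_sq_le hBm (by linarith) hvolB hu1B hu2B (u b)
  -- step 3 : integrate step2 over B'
  have hfin' : volume B' ≠ ⊤ := by
    rw [hB', Real.volume_Ioo]; exact ENNReal.ofReal_ne_top
  haveI : IsFiniteMeasure (volume.restrict B') :=
    ⟨by rw [Measure.restrict_apply_univ]; exact lt_top_iff_ne_top.2 hfin'⟩
  have hlhsint : Integrable (fun b => ‖u b - avgI u x ρ‖ ^ 2) (volume.restrict B') :=
    integrable_norm_sq_sub' hu1B'.aestronglyMeasurable hu2B' (avgI u x ρ)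
  have step3 : ∫ b in B', ‖u b - avgI u x ρ‖ ^ 2 ≤
      (2 * ρ)⁻¹ * ∫ b in B', ∫ a in B, ‖u a - u b‖ ^ 2 := by
    rw [← integral_const_mul]
    have h1 : IntegrableOn (fun b => ‖u b - avgI u x ρ‖ ^ 2) B' volume := hlhsint
    have h2 : IntegrableOn (fun b => (2 * ρ)⁻¹ * ∫ a in B, ‖u a - u b‖ ^ 2) B' volume :=
      hhint.const_mul _
    refine setIntegral_mono_on h1 h2 hB'm ?_
    intro b _
    exact step2 b
  -- step 5 : Fubini
  have step5 : ∫ b in B', ∫ a in B, ‖u a - u b‖ ^ 2 = ∫ p in B ×ˢ B', G p := by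
    have := integral_prod_symm (μ := volume.restrict B) (ν := volume.restrict B') G hGprod
    rw [← this, Measure.prod_restrict, ← Measure.volume_eq_prod]
  -- step 6
  have step6 : ∫ p in B ×ˢ B', G p ≤ M ^ e * ∫ p in B ×ˢ B', F p := by
    rw [← integral_const_mul]
    refine setIntegral_mono_on hGBB (hFBB.const_mul _) (hBm.prod hB'm) ?_
    intro p hp
    exact pointwise_sq_le u (habM p hp) he
  -- step 7
  have step7 : ∫ p in B ×ˢ B', F p ≤ EE := by
    refine setIntegral_mono_set hInt ?_ (HasSubset.Subset.eventuallyLE hsubS)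
    filter_upwards with p
    rw [hF]
    positivity
  -- combine
  have hFnonneg : (0:ℝ) ≤ ∫ p in B ×ˢ B', F p := by
    refine setIntegral_nonneg (hBm.prod hB'm) ?_
    intro p _; rw [hF]; positivity
  calc ‖avgI u x ρ - avgI u y ρ'‖ ^ 2
      ≤ (2 * ρ')⁻¹ * ∫ b in B', ‖u b - avgI u x ρ‖ ^ 2 := step1
    _ ≤ (2 * ρ')⁻¹ * ((2 * ρ)⁻¹ * ∫ b in B', ∫ a in B, ‖u a - u b‖ ^ 2) :=
        mul_le_mul_of_nonneg_left step3 (by positivity)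
    _ = (2 * ρ')⁻¹ * ((2 * ρ)⁻¹ * ∫ p in B ×ˢ B', G p) := by rw [step5]
    _ ≤ (2 * ρ')⁻¹ * ((2 * ρ)⁻¹ * (M ^ e * EE)) := by
        refine mul_le_mul_of_nonneg_left (mul_le_mul_of_nonneg_left ?_ (by positivity))
          (by positivity)
        calc ∫ p in B ×ˢ B', G p ≤ M ^ e * ∫ p in B ×ˢ B', F p := step6
          _ ≤ M ^ e * EE := mul_le_mul_of_nonneg_left step7 (by positivity)
    _ = M ^ e / (4 * ρ * ρ') * EE := by
        rw [show (4:ℝ) * ρ * ρ' = (2 * ρ') * (2 * ρ) by ring, div_eq_mul_inv, mul_inv]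
        ring


end Aux

open Set Filter in
theorem stmt_9 (d : ℕ) (s : ℝ) (hs : s ∈ Set.Ioo (1/2 : ℝ) 1) :
    ∃ C : ℝ, 0 < C ∧
      ∀ (R : ℝ), 0 < R → ∀ u : ℝ → EuclideanSpace ℝ (Fin d),
        Measurable u →
        IntegrableOn
          (fun p : ℝ × ℝ => ‖u p.1 - u p.2‖ ^ 2 / |p.1 - p.2| ^ (1 + 2*s))
          {p : ℝ × ℝ | p.1 ∈ Set.Ioo (-R) R ∨ p.2 ∈ Set.Ioo (-R) R} →
        ∃ v : ℝ → EuclideanSpace ℝ (Fin d),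
          (∀ᵐ x : ℝ, x ∈ Set.Ioo (-(R/2)) (R/2) → v x = u x) ∧
          ∀ x ∈ Set.Ioo (-(R/2)) (R/2), ∀ y ∈ Set.Ioo (-(R/2)) (R/2),
            ‖v x - v y‖ ^ 2 ≤
              C * (gammaConst 1 s / 4 *
                  ∫ p in {p : ℝ × ℝ | p.1 ∈ Set.Ioo (-R) R ∨ p.2 ∈ Set.Ioo (-R) R},
                    ‖u p.1 - u p.2‖ ^ 2 / |p.1 - p.2| ^ (1 + 2*s)) *
                |x - y| ^ (2*s - 1) := by
  obtain ⟨hs1, hs2⟩ := hs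
  -- basic constants
  set σ : ℝ := s - 1/2 with hσdef
  have hσ : 0 < σ := by rw [hσdef]; linarith
  set q : ℝ := (2:ℝ) ^ (-σ) with hqdef
  have hq0 : 0 < q := Real.rpow_pos_of_pos two_pos _
  have hq1 : q < 1 := Real.rpow_lt_one_of_one_lt_of_neg one_lt_two (by linarith)
  set c : ℝ := (2:ℝ) ^ s with hcdef
  have hc0 : 0 < c := Real.rpow_pos_of_pos two_pos _
  set K : ℝ := c / (1 - q) with hKdef
  have hK0 : 0 < K := div_pos hc0 (by linarith)
  have h1q : (1:ℝ) - q ≠ 0 := by linarith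
  have hKq : K * (1 - q) = c := by rw [hKdef]; field_simp
  have hcK : c + K * q = K := by
    have := hKq; nlinarith [this]
  have hcleK : c ≤ K := by nlinarith [mul_nonneg hK0.le hq0.le]
  set c2 : ℝ := (2:ℝ) ^ (s + 1/2) with hc2def
  have hc20 : 0 < c2 := Real.rpow_pos_of_pos two_pos _
  set Kt : ℝ := 2 * K + c2 with hKtdef
  have hKt0 : 0 < Kt := by positivity
  -- gamma constant positive
  have hγ : 0 < gammaConst 1 s := by
    rw [gammaConst]
    have h1 : 0 < Real.Gamma ((((1:ℕ):ℝ) + 2 * s) / 2) :=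
      Real.Gamma_pos_of_pos (by push_cast; linarith)
    have h2 : 0 < Real.Gamma (1 - s) := Real.Gamma_pos_of_pos (by linarith)
    have h3 : (0:ℝ) < 2 ^ (2*s) := Real.rpow_pos_of_pos two_pos _
    have h4 : (0:ℝ) < Real.pi ^ (-((1:ℕ):ℝ)/2) := Real.rpow_pos_of_pos Real.pi_pos _
    have h5 : 0 < s := by linarith
    exact div_pos (mul_pos (mul_pos (mul_pos h5 h3) h4) h1) h2
  refine ⟨Kt ^ 2 * 4 / gammaConst 1 s, by positivity, ?_⟩
  intro R hR u hu hInt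
  obtain ⟨hu2R, hu1R⟩ := l2_of_energy hs1 hR u hu hInt
  set S : Set (ℝ × ℝ) := {p : ℝ × ℝ | p.1 ∈ Set.Ioo (-R) R ∨ p.2 ∈ Set.Ioo (-R) R} with hSdef
  set EE : ℝ := ∫ p in S, ‖u p.1 - u p.2‖ ^ 2 / |p.1 - p.2| ^ (1 + 2*s) with hEEdef
  have hSm : MeasurableSet S := by
    exact (measurable_fst measurableSet_Ioo).union (measurable_snd measurableSet_Ioo)
  have hEE0 : 0 ≤ EE := by
    rw [hEEdef]
    refine setIntegral_nonneg hSm fun p _ => by positivity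
  set SE : ℝ := Real.sqrt EE with hSEdef
  have hSE0 : 0 ≤ SE := Real.sqrt_nonneg _
  have hSE2 : SE ^ 2 = EE := Real.sq_sqrt hEE0
  -- helper : from squared bound to linear bound
  have sqle : ∀ (a b : EuclideanSpace ℝ (Fin d)) (t : ℝ), 0 ≤ t →
      ‖a - b‖ ^ 2 ≤ t ^ 2 → dist a b ≤ t := by
    intro a b t ht h
    rw [dist_eq_norm]
    nlinarith [norm_nonneg (a - b)]
  -- balls inside the domain
  have ballsub : ∀ z : ℝ, z ∈ Set.Ioo (-(R/2)) (R/2) → ∀ ρ : ℝ, ρ ≤ R/2 →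
      Set.Ioo (z - ρ) (z + ρ) ⊆ Set.Ioo (-R) R := by
    intro z hz ρ hρ
    exact Set.Ioo_subset_Ioo (by linarith [hz.1]) (by linarith [hz.2])
  -- the direct two-ball estimate at one point
  have direct : ∀ z ∈ Set.Ioo (-(R/2)) (R/2), ∀ ρ ρ' : ℝ, 0 < ρ' → ρ' ≤ ρ → ρ ≤ R/2 →
      ρ ≤ 2 * ρ' → dist (avgI u z ρ) (avgI u z ρ') ≤ c * ρ ^ σ * SE := by
    intro z hz ρ ρ' hρ' hρρ hρR hρ2
    have hρ0 : 0 < ρ := lt_of_lt_of_le hρ' hρρ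
    refine sqle _ _ _ (by positivity) ?_
    have h := lemA hs1 hR u hu hInt hu2R hu1R hρ0 hρ'
      (ballsub z hz ρ hρR) (ballsub z hz ρ' (le_trans hρρ hρR))
    rw [sub_self, abs_zero, zero_add, ← hSdef, ← hEEdef] at h
    refine le_trans h ?_
    have hEEle : (ρ + ρ') ^ (1 + 2*s) / (4 * ρ * ρ') * EE ≤
        (2*ρ) ^ (1 + 2*s) / (2 * ρ^2) * EE := by
      refine mul_le_mul_of_nonneg_right ?_ hEE0
      refine div_le_div₀ (by positivity) ?_ (by positivity) ?_
      · exact Real.rpow_le_rpow (by positivity) (by linarith) (by linarith)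
      · nlinarith
    refine le_trans hEEle (le_of_eq ?_)
    have e1 : c ^ 2 = (2:ℝ) ^ (2*s) := by
      rw [hcdef, ← Real.rpow_natCast ((2:ℝ) ^ s) 2,
        ← Real.rpow_mul (by norm_num : (0:ℝ) ≤ 2),
        show s * ((2:ℕ):ℝ) = 2*s by push_cast; ring]
    have e2 : (ρ ^ σ) ^ 2 = ρ ^ (2*s - 1) := by
      rw [← Real.rpow_natCast (ρ ^ σ) 2, ← Real.rpow_mul hρ0.le,
        show σ * ((2:ℕ):ℝ) = 2*s - 1 by rw [hσdef]; push_cast; ring]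
    have e3 : (2*ρ) ^ (1 + 2*s) = (2:ℝ) ^ (1 + 2*s) * ρ ^ (1 + 2*s) :=
      Real.mul_rpow (by norm_num) hρ0.le
    have e4 : (2:ℝ) ^ (1 + 2*s) = 2 * (2:ℝ) ^ (2*s) := by
      rw [Real.rpow_add two_pos, Real.rpow_one]
    have e5 : ρ ^ (1 + 2*s) = ρ ^ (2*s - 1) * ρ ^ 2 := by
      rw [← Real.rpow_natCast ρ 2, ← Real.rpow_add hρ0,
        show 2*s - 1 + ((2:ℕ):ℝ) = 1 + 2*s by push_cast; ring]
    rw [mul_pow, mul_pow, hSE2, e1, e2, e3, e4, e5]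
    field_simp

  -- induction: master estimate
  have master : ∀ n : ℕ, ∀ z ∈ Set.Ioo (-(R/2)) (R/2), ∀ ρ ρ' : ℝ, 0 < ρ' → ρ' ≤ ρ →
      ρ ≤ R/2 → ρ * (2⁻¹:ℝ)^(n+1) < ρ' →
      dist (avgI u z ρ) (avgI u z ρ') ≤ K * ρ ^ σ * SE := by
    intro n
    induction n with
    | zero =>
      intro z hz ρ ρ' hρ' hρρ hρR hlt
      have hρ0 : 0 < ρ := lt_of_lt_of_le hρ' hρρ
      have h2 : ρ ≤ 2 * ρ' := by
        have : ρ * (2⁻¹:ℝ)^(0+1) = ρ/2 := by ring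
        rw [this] at hlt; linarith
      refine le_trans (direct z hz ρ ρ' hρ' hρρ hρR h2) ?_
      have hρσ : (0:ℝ) ≤ ρ ^ σ := Real.rpow_nonneg hρ0.le σ
      have := mul_le_mul_of_nonneg_right (mul_le_mul_of_nonneg_right hcleK hρσ) hSE0
      exact this
    | succ n ih =>
      intro z hz ρ ρ' hρ' hρρ hρR hlt
      have hρ0 : 0 < ρ := lt_of_lt_of_le hρ' hρρ
      by_cases hcase : ρ ≤ 2 * ρ'
      · refine le_trans (direct z hz ρ ρ' hρ' hρρ hρR hcase) ?_
        have hρσ : (0:ℝ) ≤ ρ ^ σ := Real.rpow_nonneg hρ0.le σ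
        exact mul_le_mul_of_nonneg_right (mul_le_mul_of_nonneg_right hcleK hρσ) hSE0
      · push_neg at hcase
        have hhalf : 0 < ρ/2 := by linarith
        have d1 : dist (avgI u z ρ) (avgI u z (ρ/2)) ≤ c * ρ ^ σ * SE :=
          direct z hz ρ (ρ/2) hhalf (by linarith) hρR (by linarith)
        have harg : ρ/2 * (2⁻¹:ℝ)^(n+1) < ρ' := by
          have : ρ/2 * (2⁻¹:ℝ)^(n+1) = ρ * (2⁻¹:ℝ)^(n+1+1) := by rw [pow_succ]; ring
          rw [this]; exact hlt
        have d2 : dist (avgI u z (ρ/2)) (avgI u z ρ') ≤ K * (ρ/2) ^ σ * SE :=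
          ih z hz (ρ/2) ρ' hρ' (by linarith) (by linarith) harg
        have hρhalfσ : ((ρ/2 : ℝ)) ^ σ = ρ ^ σ * q := by
          rw [div_eq_mul_inv, Real.mul_rpow hρ0.le (by norm_num),
            Real.inv_rpow (by norm_num : (0:ℝ) ≤ 2), ← Real.rpow_neg (by norm_num : (0:ℝ) ≤ 2),
            hqdef]
        calc dist (avgI u z ρ) (avgI u z ρ')
            ≤ dist (avgI u z ρ) (avgI u z (ρ/2)) + dist (avgI u z (ρ/2)) (avgI u z ρ') :=
              dist_triangle _ _ _
          _ ≤ c * ρ ^ σ * SE + K * (ρ/2) ^ σ * SE := add_le_add d1 d2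
          _ = (c + K * q) * ρ ^ σ * SE := by rw [hρhalfσ]; ring
          _ = K * ρ ^ σ * SE := by rw [hcK]
  have masterAll : ∀ z ∈ Set.Ioo (-(R/2)) (R/2), ∀ ρ ρ' : ℝ, 0 < ρ' → ρ' ≤ ρ → ρ ≤ R/2 →
      dist (avgI u z ρ) (avgI u z ρ') ≤ K * ρ ^ σ * SE := by
    intro z hz ρ ρ' hρ' hρρ hρR
    have hρ0 : 0 < ρ := lt_of_lt_of_le hρ' hρρ
    obtain ⟨n, hn⟩ := exists_pow_lt_of_lt_one (div_pos hρ' hρ0) (by norm_num : (2⁻¹:ℝ) < 1)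
    refine master n z hz ρ ρ' hρ' hρρ hρR ?_
    have hp : (0:ℝ) < (2⁻¹:ℝ)^n := by positivity
    rw [lt_div_iff₀ hρ0] at hn
    have h1 : ρ * (2⁻¹:ℝ)^n < ρ' := by nlinarith
    have h2 : ρ * (2⁻¹:ℝ)^(n+1) = (ρ * (2⁻¹:ℝ)^n) * 2⁻¹ := by rw [pow_succ]; ring
    rw [h2]; nlinarith [mul_pos hρ0 hp]
  -- the dyadic sequence of radii
  set ρseq : ℕ → ℝ := fun k => R/2 * (2⁻¹:ℝ)^k with hρseqdef
  have hρseqpos : ∀ k, 0 < ρseq k := by intro k; rw [hρseqdef]; positivity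
  have hρseqle : ∀ k, ρseq k ≤ R/2 := by
    intro k
    have h1 : ((2:ℝ)⁻¹)^k ≤ 1 := pow_le_one₀ (by norm_num) (by norm_num)
    rw [hρseqdef]
    nlinarith
  have hanti : ∀ k, ρseq (k+1) ≤ ρseq k := by
    intro k
    rw [hρseqdef]
    simp only
    rw [pow_succ]
    nlinarith [hρseqpos k, pow_pos (show (0:ℝ) < 2⁻¹ by norm_num) k]
  have htend : Filter.Tendsto ρseq Filter.atTop (nhds 0) := by
    have h := tendsto_pow_atTop_nhds_zero_of_lt_one (by norm_num : (0:ℝ) ≤ 2⁻¹)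
      (by norm_num : (2⁻¹:ℝ) < 1)
    have h2 := h.const_mul (R/2)
    rw [mul_zero] at h2
    exact h2
  -- geometric bound and Cauchy property
  have hgeom : ∀ z ∈ Set.Ioo (-(R/2)) (R/2), ∀ k,
      dist (avgI u z (ρseq k)) (avgI u z (ρseq (k+1))) ≤ (K * (R/2)^σ * SE) * q^k := by
    intro z hz k
    refine le_trans (masterAll z hz (ρseq k) (ρseq (k+1)) (hρseqpos _) (hanti k) (hρseqle k))
      (le_of_eq ?_)
    have hkey : (ρseq k) ^ σ = (R/2)^σ * q^k := by
      rw [hρseqdef]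
      simp only
      rw [Real.mul_rpow (by positivity) (by positivity)]
      congr 1
      have l1 : ((2⁻¹:ℝ)^(k:ℕ)) ^ σ = (2:ℝ) ^ (-((k:ℝ)*σ)) := by
        rw [← Real.rpow_natCast (2⁻¹:ℝ) k, ← Real.rpow_mul (by norm_num : (0:ℝ) ≤ 2⁻¹),
          Real.inv_rpow (by norm_num : (0:ℝ) ≤ 2), ← Real.rpow_neg (by norm_num : (0:ℝ) ≤ 2)]
      have l2 : (q:ℝ)^(k:ℕ) = (2:ℝ) ^ (-((k:ℝ)*σ)) := by
        rw [hqdef, ← Real.rpow_natCast ((2:ℝ)^(-σ)) k,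
          ← Real.rpow_mul (by norm_num : (0:ℝ) ≤ 2),
          show -σ * (k:ℝ) = -((k:ℝ)*σ) by ring]
      rw [l1, l2]
    rw [hkey]; ring
  have cauchy : ∀ z ∈ Set.Ioo (-(R/2)) (R/2), CauchySeq (fun k => avgI u z (ρseq k)) :=
    fun z hz => cauchySeq_of_le_geometric q (K * (R/2)^σ * SE) hq1 (hgeom z hz)
  set v0 : ℝ → EuclideanSpace ℝ (Fin d) :=
    fun z => limUnder Filter.atTop (fun k => avgI u z (ρseq k)) with hv0def
  have hv0tend : ∀ z ∈ Set.Ioo (-(R/2)) (R/2),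
      Filter.Tendsto (fun k => avgI u z (ρseq k)) Filter.atTop (nhds (v0 z)) :=
    fun z hz => (cauchy z hz).tendsto_limUnder
  have limdist : ∀ z ∈ Set.Ioo (-(R/2)) (R/2), ∀ ρ : ℝ, 0 < ρ → ρ ≤ R/2 →
      dist (avgI u z ρ) (v0 z) ≤ K * ρ ^ σ * SE := by
    intro z hz ρ hρ0 hρR
    have htends : Filter.Tendsto (fun k => dist (avgI u z ρ) (avgI u z (ρseq k)))
        Filter.atTop (nhds (dist (avgI u z ρ) (v0 z))) :=
      tendsto_const_nhds.dist (hv0tend z hz)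
    refine le_of_tendsto htends ?_
    filter_upwards [htend.eventually_lt_const hρ0] with k hk
    exact masterAll z hz ρ (ρseq k) (hρseqpos k) hk.le hρR
  -- rpow squaring helper
  have rsq : ∀ t : ℝ, 0 ≤ t → (t ^ σ) ^ 2 = t ^ (2*s - 1) := by
    intro t ht
    rw [← Real.rpow_natCast (t ^ σ) 2, ← Real.rpow_mul ht,
      show σ * ((2:ℕ):ℝ) = 2*s - 1 by rw [hσdef]; push_cast; ring]
  -- Hölder estimate for v0
  have holder : ∀ x ∈ Set.Ioo (-(R/2)) (R/2), ∀ y ∈ Set.Ioo (-(R/2)) (R/2), x ≠ y →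
      dist (v0 x) (v0 y) ≤ Kt * |x - y| ^ σ * SE := by
    intro x hx y hy hxy
    have hr0 : 0 < |x - y| := abs_pos.2 (sub_ne_zero.2 hxy)
    have hxabs : |x| < R/2 := abs_lt.2 ⟨by linarith [hx.1], hx.2⟩
    have hyabs : |y| < R/2 := abs_lt.2 ⟨by linarith [hy.1], hy.2⟩
    have hrR : |x - y| < R := by
      calc |x - y| ≤ |x| + |y| := abs_sub _ _
        _ < R := by linarith
    have hρ0 : 0 < |x - y|/2 := by linarith
    have hρR : |x - y|/2 ≤ R/2 := by linarith
    have hrσ : (0:ℝ) ≤ |x - y| ^ σ := Real.rpow_nonneg hr0.le σ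
    have mid : dist (avgI u x (|x - y|/2)) (avgI u y (|x - y|/2)) ≤ c2 * |x - y| ^ σ * SE := by
      refine sqle _ _ _ (by positivity) ?_
      have h := lemA hs1 hR u hu hInt hu2R hu1R hρ0 hρ0
        (ballsub x hx _ hρR) (ballsub y hy _ hρR)
      rw [← hSdef, ← hEEdef] at h
      refine le_trans h (le_of_eq ?_)
      rw [show |x - y| + |x - y|/2 + |x - y|/2 = 2 * |x - y| by ring,
        show (4:ℝ) * (|x - y|/2) * (|x - y|/2) = |x - y|^2 by ring]
      have e3 : (2 * |x - y|) ^ (1 + 2*s) = (2:ℝ) ^ (1 + 2*s) * |x - y| ^ (1 + 2*s) :=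
        Real.mul_rpow (by norm_num) hr0.le
      have ec2 : c2 ^ 2 = (2:ℝ) ^ (1 + 2*s) := by
        rw [hc2def, ← Real.rpow_natCast ((2:ℝ) ^ (s + 1/2)) 2,
          ← Real.rpow_mul (by norm_num : (0:ℝ) ≤ 2),
          show (s + 1/2) * ((2:ℕ):ℝ) = 1 + 2*s by push_cast; ring]
      have e5 : |x - y| ^ (1 + 2*s) = |x - y| ^ (2*s - 1) * |x - y| ^ 2 := by
        rw [← Real.rpow_natCast |x - y| 2, ← Real.rpow_add hr0,
          show 2*s - 1 + ((2:ℕ):ℝ) = 1 + 2*s by push_cast; ring]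
      rw [mul_pow, mul_pow, hSE2, ec2, rsq _ hr0.le, e3, e5, mul_div_assoc,
        mul_div_cancel_right₀ _ (pow_ne_zero 2 (ne_of_gt hr0))]
    have hhalfle : (|x - y|/2 : ℝ) ^ σ ≤ |x - y| ^ σ :=
      Real.rpow_le_rpow (by positivity) (by linarith) hσ.le
    have bump : K * (|x - y|/2) ^ σ * SE ≤ K * |x - y| ^ σ * SE :=
      mul_le_mul_of_nonneg_right (mul_le_mul_of_nonneg_left hhalfle hK0.le) hSE0
    have d1 : dist (v0 x) (avgI u x (|x - y|/2)) ≤ K * |x - y| ^ σ * SE := by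
      rw [dist_comm]
      exact le_trans (limdist x hx _ hρ0 hρR) bump
    have d3 : dist (avgI u y (|x - y|/2)) (v0 y) ≤ K * |x - y| ^ σ * SE :=
      le_trans (limdist y hy _ hρ0 hρR) bump
    calc dist (v0 x) (v0 y)
        ≤ dist (v0 x) (avgI u x (|x - y|/2)) + dist (avgI u x (|x - y|/2)) (avgI u y (|x - y|/2))
            + dist (avgI u y (|x - y|/2)) (v0 y) := dist_triangle4 _ _ _ _
      _ ≤ K * |x - y| ^ σ * SE + c2 * |x - y| ^ σ * SE + K * |x - y| ^ σ * SE :=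
          add_le_add (add_le_add d1 mid) d3
      _ = Kt * |x - y| ^ σ * SE := by rw [hKtdef]; ring
  -- identification with u via Lebesgue differentiation
  set w : ℝ → EuclideanSpace ℝ (Fin d) := (Set.Ioo (-R) R).indicator u with hwdef
  have hwint : Integrable w volume := by
    rw [hwdef, integrable_indicator_iff measurableSet_Ioo]; exact hu1R
  have hwloc : LocallyIntegrable w volume := hwint.locallyIntegrable
  have hleb := IsUnifLocDoublingMeasure.ae_tendsto_average (μ := (volume : Measure ℝ)) hwloc 1
  have havgw : ∀ z ∈ Set.Ioo (-(R/2)) (R/2), ∀ ρ : ℝ, 0 < ρ → ρ ≤ R/2 →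
      (⨍ a in Metric.closedBall z ρ, w a) = avgI u z ρ := by
    intro z hz ρ h0 hle
    have hIccsub : Set.Icc (z - ρ) (z + ρ) ⊆ Set.Ioo (-R) R := by
      intro a ha
      exact Set.mem_Ioo.mpr ⟨by linarith [ha.1, hz.1], by linarith [ha.2, hz.2]⟩
    rw [Real.closedBall_eq_Icc, setAverage_eq]
    have hIccIoo : (∫ a in Set.Icc (z - ρ) (z + ρ), w a) = ∫ a in Set.Ioo (z - ρ) (z + ρ), w a :=
      (setIntegral_congr_set (Ioo_ae_eq_Icc (μ := (volume : Measure ℝ)))).symm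
    have hwu : (∫ a in Set.Ioo (z - ρ) (z + ρ), w a) = ∫ a in Set.Ioo (z - ρ) (z + ρ), u a := by
      refine setIntegral_congr_fun measurableSet_Ioo ?_
      intro a ha
      exact Set.indicator_of_mem (hIccsub (Set.Ioo_subset_Icc_self ha)) u
    rw [hIccIoo, hwu, measureReal_def, Real.volume_Icc, ENNReal.toReal_ofReal (by linarith),
      show z + ρ - (z - ρ) = 2 * ρ by ring]
    rfl
  have haeq : ∀ᵐ z : ℝ, z ∈ Set.Ioo (-(R/2)) (R/2) → v0 z = u z := by
    filter_upwards [hleb] with z hzleb hz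
    have hδ : Filter.Tendsto ρseq Filter.atTop (nhdsWithin 0 (Set.Ioi 0)) :=
      tendsto_nhdsWithin_of_tendsto_nhds_of_eventually_within _ htend
        (Filter.Eventually.of_forall fun k => Set.mem_Ioi.2 (hρseqpos k))
    have hmem : ∀ᶠ k in Filter.atTop, z ∈ Metric.closedBall z (1 * ρseq k) :=
      Filter.Eventually.of_forall fun k =>
        Metric.mem_closedBall_self (by nlinarith [hρseqpos k])
    have h1 := hzleb (fun _ => z) ρseq hδ hmem
    have h2 : Filter.Tendsto (fun k => avgI u z (ρseq k)) Filter.atTop (nhds (w z)) := by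
      refine h1.congr ?_
      intro k
      exact havgw z hz (ρseq k) (hρseqpos k) (hρseqle k)
    have huniq : v0 z = w z := tendsto_nhds_unique (hv0tend z hz) h2
    rw [huniq, hwdef]
    exact Set.indicator_of_mem (Set.mem_Ioo.mpr ⟨by linarith [hz.1], by linarith [hz.2]⟩) u
  -- conclusion
  classical
  refine ⟨fun z => if z ∈ Set.Ioo (-(R/2)) (R/2) then v0 z else u z, ?_, ?_⟩
  · filter_upwards [haeq] with z hz hzmem
    rw [if_pos hzmem]
    exact hz hzmem
  · intro x hx y hy
    have hgx : (fun z => if z ∈ Set.Ioo (-(R/2)) (R/2) then v0 z else u z) x = v0 x := if_pos hx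
    have hgy : (fun z => if z ∈ Set.Ioo (-(R/2)) (R/2) then v0 z else u z) y = v0 y := if_pos hy
    rw [hgx, hgy]
    rcases eq_or_ne x y with h | h
    · subst h
      simp [sub_self, Real.zero_rpow (show 2*s - 1 ≠ 0 by intro hc; linarith)]
    · have hd := holder x hx y hy h
      have hr0 : 0 < |x - y| := abs_pos.2 (sub_ne_zero.2 h)
      have hsq : ‖v0 x - v0 y‖ ^ 2 ≤ (Kt * |x - y| ^ σ * SE) ^ 2 := by
        rw [← dist_eq_norm]
        exact pow_le_pow_left₀ dist_nonneg hd 2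
      refine le_trans hsq (le_of_eq ?_)
      rw [mul_pow, mul_pow, hSE2, rsq _ hr0.le]
      have hγ' : gammaConst 1 s ≠ 0 := ne_of_gt hγ
      field_simp
end
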